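/- Divided difference operators act on Schubert classes by: if λ_i > λ_{i+1} (so s_i·λ < λ), then ∂_i S̃_λ = S̃_{s_i·λ}; if λ_i ≤ λ_{i+1}, then ∂_i S̃_λ = 0. -/

import Mathlib

def ones (n : ℕ) (l : Fin n → Bool) : ℕ :=
  (Finset.univ.filter (fun i => l i = true)).card

def invCount (n : ℕ) (l : Fin n → Bool) : ℕ :=
  (Finset.univ.filter (fun p : Fin n × Fin n =>
    p.1 < p.2 ∧ l p.1 = true ∧ l p.2 = false)).card

def psum (n : ℕ) (l : Fin n → Bool) (j : ℕ) : ℕ :=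
  (Finset.univ.filter (fun i : Fin n => i.val < j ∧ l i = true)).card

/-- dominance order: `domLE n l l'` means `l ≤ l'`. -/
def domLE (n : ℕ) (l l' : Fin n → Bool) : Prop :=
  ∀ j : ℕ, psum n l j ≤ psum n l' j

/-- the identity string `0^{n-k} 1^k`. -/
def idStr (n k : ℕ) : Fin n → Bool := fun i => decide (n - k ≤ i.val)

/-- the divisor string `0^{n-k-1} 1 0 1^{k-1}`. -/
def dvStr (n k : ℕ) : Fin n → Bool :=
  fun i => decide (i.val = n - k - 1 ∨ n - k + 1 ≤ i.val)

open MvPolynomial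

noncomputable def invProd (n : ℕ) (l : Fin n → Bool) : MvPolynomial (Fin n) ℤ :=
  ∏ p ∈ Finset.univ.filter (fun p : Fin n × Fin n =>
      p.1 < p.2 ∧ l p.1 = true ∧ l p.2 = false), (X p.2 - X p.1)

/-- the GKM condition for a tuple of polynomials indexed by binary strings
(imposed on the strings with `k` ones). -/
def IsGKM (n k : ℕ) (α : (Fin n → Bool) → MvPolynomial (Fin n) ℤ) : Prop :=
  ∀ l : Fin n → Bool, ones n l = k → ∀ i j : Fin n,
    (X i - X j : MvPolynomial (Fin n) ℤ) ∣ (α l - α (l ∘ Equiv.swap i j))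

/-- `α` is supported above `l` in dominance order. -/
def SuppAbove (n k : ℕ) (α : (Fin n → Bool) → MvPolynomial (Fin n) ℤ)
    (l : Fin n → Bool) : Prop :=
  ∀ m : Fin n → Bool, ones n m = k → α m ≠ 0 → domLE n l m

/-- `S` is a family of equivariant Schubert classes. -/
def IsSchubertFamily (n k : ℕ)
    (S : (Fin n → Bool) → (Fin n → Bool) → MvPolynomial (Fin n) ℤ) : Prop :=
  ∀ l : Fin n → Bool, ones n l = k →
    IsGKM n k (S l) ∧ SuppAbove n k (S l) l ∧ S l l = invProd n l ∧
    ∀ m : Fin n → Bool, (S l m).IsHomogeneous (invCount n l)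

instance (n k : ℕ) : DecidablePred (fun l : Fin n → Bool => ones n l = k) :=
  fun _ => Nat.decEq _ _

/-- the action `(sᵢ·α)_μ = sᵢ·(α_{sᵢμ})` of the simple transposition
`sᵢ = (i ↔ i+1)` on tuples, permuting positions and variables. -/
noncomputable def sAct (n : ℕ) (i : ℕ) (h : i + 1 < n)
    (α : (Fin n → Bool) → MvPolynomial (Fin n) ℤ) :
    (Fin n → Bool) → MvPolynomial (Fin n) ℤ :=
  fun m => rename (⇑(Equiv.swap (⟨i, by omega⟩ : Fin n) ⟨i + 1, h⟩))
    (α (m ∘ ⇑(Equiv.swap (⟨i, by omega⟩ : Fin n) ⟨i + 1, h⟩)))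

/-!
Write `σ` for the transposition of the positions `a`, `b = a + 1`. A GKM class whose components
are homogeneous of degree `d` and vanish at every string with at most `d` inversions is zero:
at a string `m` of least inversion count where it does not vanish, the GKM conditions along the
inversions of `m` make their pairwise coprime linear forms divide the component, so `m` has at
most `d` inversions. Since the inversion count is strictly monotone in the dominance order, a
Schubert class `S̃_λ` is therefore determined by its degree, its support above `λ` and its value
at `λ`.

If `λ_a = 1`, `λ_b = 0`, then `y_b - y_a` divides `S̃_λ - σ S̃_λ` everywhere; the quotient is
again GKM (it is `σ`-invariant, and the other forms `y_p - y_q` are primes not dividing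
`y_b - y_a`), has degree `l(λ) - 1`, is supported above `σλ` and equals the product of the
inversion forms of `σλ` at `σλ`, so it is `S̃_{σλ}`. If `λ_a = λ_b`, the class `σ S̃_λ` has the
characterising properties of `S̃_λ`; if `λ_a = 0`, `λ_b = 1`, applying `σ` to the first case for
`σλ` gives `σ S̃_λ = S̃_λ`.
-/

namespace MvPolynomial

variable {σ R : Type*} [CommRing R]

theorem X_sub_X_dvd_sub_rename_swap [DecidableEq σ] (a b : σ) (f : MvPolynomial σ R) :
    X a - X b ∣ f - rename (Equiv.swap a b) f := by
  set I := Ideal.span {(X a - X b : MvPolynomial σ R)}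
  have hab : Ideal.Quotient.mk I (X a) = Ideal.Quotient.mk I (X b) :=
    Ideal.Quotient.eq.mpr (Ideal.mem_span_singleton_self _)
  have hmk : (Ideal.Quotient.mkₐ R I).comp (rename (Equiv.swap a b)) = Ideal.Quotient.mkₐ R I := by
    ext t
    simp only [AlgHom.comp_apply, rename_X, Ideal.Quotient.mkₐ_eq_mk, Equiv.swap_apply_def]
    split_ifs <;> simp_all
  rw [← Ideal.mem_span_singleton, ← Ideal.Quotient.eq]
  exact congr($hmk f).symm

theorem rename_swap_rename_swap [DecidableEq σ] (a b : σ) (f : MvPolynomial σ R) :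
    rename (Equiv.swap a b) (rename (Equiv.swap a b) f) = f := by
  simp only [rename_rename, Function.comp_def, Equiv.swap_apply_self]
  exact rename_id_apply f

theorem eval_eq_zero_of_X_sub_X_dvd {p q : σ} {f : MvPolynomial σ R} (h : X p - X q ∣ f)
    {x : σ → R} (hx : x p = x q) : eval x f = 0 := by
  obtain ⟨g, rfl⟩ := h
  simp [hx]

theorem eq_and_eq_or_eq_and_eq_of_X_sub_X_dvd [Nontrivial R] [DecidableEq σ] {a b p q : σ}
    (hab : a ≠ b) (h : X p - X q ∣ (X a - X b : MvPolynomial σ R)) :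
    (p = a ∧ q = b) ∨ (p = b ∧ q = a) := by
  have mem : ∀ c, c = a ∨ c = b → c = p ∨ c = q := by
    intro c hc
    by_contra! hpq
    have := eval_eq_zero_of_X_sub_X_dvd h (x := Pi.single c 1)
    rcases hc with rfl | rfl <;> simp_all [Ne.symm hab]
  rcases mem a (.inl rfl), mem b (.inr rfl) with ⟨rfl | rfl, rfl | rfl⟩ <;> tauto

theorem prime_X_sub_X [IsDomain R] [DecidableEq σ] {a b : σ} (hab : a ≠ b) :
    Prime (X a - X b : MvPolynomial σ R) := by
  let shift : MvPolynomial σ R ≃ₐ[R] MvPolynomial σ R :=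
    AlgEquiv.ofAlgHom (aeval (Function.update X a (X a - X b)))
      (aeval (Function.update X a (X a + X b)))
      (by ext t; by_cases t = a <;> simp_all [Ne.symm hab])
      (by ext t; by_cases t = a <;> simp_all [Ne.symm hab])
  have : shift (X a) = X a - X b := by simp [shift]
  rw [← this]
  exact (MulEquiv.prime_iff shift.toMulEquiv).mpr X_prime

attribute [local instance] gradedAlgebra in
theorem IsHomogeneous.of_mul_left [IsDomain R] {φ ψ : MvPolynomial σ R} {m n : ℕ}
    (h : (φ * ψ).IsHomogeneous n) (hφ : φ.IsHomogeneous m) (hφ0 : φ ≠ 0) :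
    ψ.IsHomogeneous (n - m) := by
  have component_eq_zero : ∀ j, m + j ≠ n → homogeneousComponent j ψ = 0 := by
    intro j hj
    have hmul := DirectSum.coe_decompose_mul_of_left_mem_of_le (homogeneousSubmodule σ R)
      (b := ψ) ((mem_homogeneousSubmodule _ _).mpr hφ) (Nat.le_add_right m j)
    have hc : ∀ (x : MvPolynomial σ R) i,
        (DirectSum.decompose (homogeneousSubmodule σ R) x i : MvPolynomial σ R) =
          homogeneousComponent i x := decomposition.decompose'_apply
    rw [hc, hc, Nat.add_sub_cancel_left,
      homogeneousComponent_of_mem ((mem_homogeneousSubmodule _ _).mpr h), if_neg hj] at hmul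
    exact (mul_eq_zero.mp hmul.symm).resolve_left hφ0
  intro d hd
  have : homogeneousComponent d.degree ψ ≠ 0 := fun h0 => by
    simpa [coeff_homogeneousComponent, hd] using congr(coeff d $h0)
  have := not_imp_comm.mp (component_eq_zero _) this
  have hdeg : Finsupp.weight 1 d = d.degree := by rw [Finsupp.degree_eq_weight_one]; rfl
  omega

end MvPolynomial

open Finset

theorem Finset.prod_dvd_of_prime_of_pairwise_not_dvd {ι M₀ : Type*} [CommMonoidWithZero M₀]
    [IsCancelMulZero M₀] {s : Finset ι} {f : ι → M₀} {a : M₀} (hp : ∀ i ∈ s, Prime (f i))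
    (hs : (s : Set ι).Pairwise fun i j => ¬ f i ∣ f j) (ha : ∀ i ∈ s, f i ∣ a) :
    ∏ i ∈ s, f i ∣ a := by
  classical
  rw [prod_eq_multiset_prod]
  refine Multiset.prod_primes_dvd a (by simpa using hp) (by simpa using ha) fun b => ?_
  rw [Multiset.countP_map, ← filter_val, card_val, card_le_one]
  intro i hi j hj
  simp only [mem_filter] at hi hj
  by_contra hij
  exact hs hi.1 hj.1 hij (hi.2.symm.trans hj.2).dvd

theorem Finset.two_mul_card_offDiag_filter_lt {ι : Type*} [LinearOrder ι] (s : Finset ι) :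
    2 * #{p ∈ s.offDiag | p.1 < p.2} = #s * #s - #s := by
  rw [← offDiag_card, ← card_filter_add_card_filter_not (s := s.offDiag) (fun p => p.1 < p.2),
    two_mul]
  congr 1
  apply card_nbij' Prod.swap Prod.swap <;> rintro ⟨x, y⟩ <;> simp
  · exact fun hx hy hxy hlt => ⟨⟨hy, hx, Ne.symm hxy⟩, hlt.le⟩
  · exact fun hx hy hxy hle => ⟨⟨hy, hx, Ne.symm hxy⟩, lt_of_le_of_ne hle (Ne.symm hxy)⟩

section BinaryStrings

variable {n : ℕ} {a b : Fin n}

theorem psum_succ (l : Fin n → Bool) {j : ℕ} (hj : j < n) :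
    psum n l (j + 1) = psum n l j + (l ⟨j, hj⟩).toNat := by
  simp only [_root_.psum, card_filter]
  rw [← Fintype.sum_ite_eq' (⟨j, hj⟩ : Fin n) (fun i => (l i).toNat), ← sum_add_distrib]
  refine sum_congr rfl fun i _ => ?_
  by_cases hi : (i : ℕ) = j
  · cases l i <;> simp [Fin.ext_iff, hi]
  · have : (i : ℕ) < j + 1 ↔ (i : ℕ) < j := by omega
    simp [Fin.ext_iff, this, hi]

theorem psum_of_le (l : Fin n → Bool) {j : ℕ} (hj : n ≤ j) : psum n l j = ones n l := by
  simp only [_root_.psum, ones]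
  congr 1
  ext i
  simp [lt_of_lt_of_le i.isLt hj]

theorem eq_of_forall_psum_eq {l m : Fin n → Bool} (h : ∀ j, psum n l j = psum n m j) : l = m := by
  funext i
  have := h (i + 1)
  rw [psum_succ l i.isLt, psum_succ m i.isLt, h i] at this
  revert this
  cases l i <;> cases m i <;> simp

theorem psum_comp_swap (hab : a < b) (m : Fin n → Bool) (j : ℕ) :
    (psum n (m ∘ Equiv.swap a b) j : ℤ) =
      psum n m j + if (a : ℕ) < j ∧ j ≤ b then ((m b).toNat : ℤ) - (m a).toNat else 0 := by
  have hσ : psum n (m ∘ Equiv.swap a b) j =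
      ∑ i, if (Equiv.swap a b i : ℕ) < j ∧ m i = true then 1 else 0 := by
    rw [_root_.psum, card_filter, ← Equiv.sum_comp (Equiv.swap a b)]
    simp
  rw [hσ, _root_.psum, card_filter, ← sub_eq_iff_eq_add', Nat.cast_sum, Nat.cast_sum,
    ← sum_sub_distrib, Fintype.sum_eq_add a b hab.ne]
  · have : (a : ℕ) < b := hab
    cases m a <;> cases m b <;> simp <;> split_ifs <;> omega
  · rintro i ⟨hia, hib⟩
    simp [Equiv.swap_apply_of_ne_of_ne hia hib]

theorem sum_psum (l : Fin n → Bool) :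
    ∑ j : Fin n, psum n l j = #{p : Fin n × Fin n | p.1 < p.2 ∧ l p.1 = true} := by
  simp only [_root_.psum, card_filter]
  rw [← Fintype.sum_prod_type_right']
  simp [and_comm]

theorem card_lt_fst_true_eq_invCount_add (l : Fin n → Bool) :
    #{p : Fin n × Fin n | p.1 < p.2 ∧ l p.1 = true} =
      invCount n l + #{p ∈ (univ.filter fun i => l i = true).offDiag | p.1 < p.2} := by
  rw [← card_filter_add_card_filter_not (p := fun p : Fin n × Fin n => l p.2 = false),
    invCount, filter_filter, filter_filter]
  congr 2 <;> ext p <;> simp only [mem_filter, mem_univ, mem_offDiag, true_and] <;>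
    cases l p.1 <;> cases l p.2 <;> simp +contextual [ne_of_lt]

-- `∑ j, psum n l j` is `invCount n l` plus the number of pairs of ones of `l`, and the latter
-- only depends on `ones n l`.
theorem invCount_lt_of_domLE {l m : Fin n → Bool} (hlm : domLE n l m) (hne : l ≠ m)
    (hones : ones n l = ones n m) : invCount n l < invCount n m := by
  obtain ⟨j, hj⟩ : ∃ j, psum n l j < psum n m j := by
    by_contra! h
    exact hne (eq_of_forall_psum_eq fun j => le_antisymm (hlm j) (h j))
  have hjn : j < n := by
    by_contra! h
    rw [psum_of_le l h, psum_of_le m h, hones] at hj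
    exact hj.false
  have hsum : ∑ i : Fin n, psum n l i < ∑ i : Fin n, psum n m i :=
    sum_lt_sum (fun i _ => hlm i) ⟨⟨j, hjn⟩, mem_univ _, hj⟩
  have hl := two_mul_card_offDiag_filter_lt (univ.filter fun i => l i = true)
  have hm := two_mul_card_offDiag_filter_lt (univ.filter fun i => m i = true)
  rw [sum_psum, sum_psum, card_lt_fst_true_eq_invCount_add, card_lt_fst_true_eq_invCount_add] at hsum
  simp only [ones] at hones
  rw [hones] at hl
  omega

theorem domLE_trans {l m p : Fin n → Bool} (hlm : domLE n l m) (hmp : domLE n m p) :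
    domLE n l p :=
  fun j => (hlm j).trans (hmp j)

theorem ones_comp_perm (l : Fin n → Bool) (σ : Equiv.Perm (Fin n)) :
    ones n (l ∘ σ) = ones n l := by
  simp only [ones, card_filter]
  exact Equiv.sum_comp σ (fun i => if l i = true then 1 else 0)

theorem comp_swap_eq_self {l : Fin n → Bool} (h : l a = l b) : l ∘ Equiv.swap a b = l := by
  funext t
  simp only [Function.comp_apply, Equiv.swap_apply_def]
  split_ifs <;> simp_all

theorem comp_swap_comp_swap (l : Fin n → Bool) :
    (l ∘ Equiv.swap a b) ∘ Equiv.swap a b = l := by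
  simp [Function.comp_def]

theorem domLE_comp_swap (hab : a < b) {m : Fin n → Bool} (ha : m a = true)
    (hb : m b = false) : domLE n (m ∘ Equiv.swap a b) m := by
  intro j
  have := psum_comp_swap hab m j
  simp only [ha, hb] at this
  split_ifs at this <;> simp at this <;> omega

theorem comp_swap_ne {m : Fin n → Bool} (ha : m a = true) (hb : m b = false) :
    m ∘ Equiv.swap a b ≠ m := fun h => by
  simpa [ha, hb] using congr_fun h a

theorem invCount_comp_swap_lt (hab : a < b) {m : Fin n → Bool} (ha : m a = true)
    (hb : m b = false) : invCount n (m ∘ Equiv.swap a b) < invCount n m :=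
  invCount_lt_of_domLE (domLE_comp_swap hab ha hb) (comp_swap_ne ha hb) (ones_comp_perm m _)

end BinaryStrings

section AdjacentSwap

variable {n : ℕ} {a b : Fin n}

theorem Fin.lt_of_val_eq_add_one (hab : (b : ℕ) = a + 1) : a < b := by
  rw [Fin.lt_def]
  omega

theorem domLE_comp_swap_of_domLE_comp_swap (hab : (b : ℕ) = a + 1) {lam m : Fin n → Bool}
    (ha : lam a = true) (hb : lam b = false) (h : domLE n lam (m ∘ Equiv.swap a b)) :
    domLE n (lam ∘ Equiv.swap a b) m := by
  have hlt := Fin.lt_of_val_eq_add_one hab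
  intro j
  have hl := psum_comp_swap hlt lam j
  have hm := psum_comp_swap hlt m j
  have := h j
  have := Bool.toNat_le (m b)
  rw [ha, hb] at hl
  split_ifs at hl hm <;> simp at hl <;> omega

-- Only the prefix sum at `b` differs between `m` and `m ∘ swap a b`; there compare at `a` if
-- `lam a = false`, and at `b + 1` if `lam b = true`.
theorem domLE_of_domLE_comp_swap (hab : (b : ℕ) = a + 1) {lam m : Fin n → Bool}
    (hl : lam a = false ∨ lam b = true) (h : domLE n lam (m ∘ Equiv.swap a b)) :
    domLE n lam m := by
  have hlt := Fin.lt_of_val_eq_add_one hab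
  intro j
  have hm := psum_comp_swap hlt m j
  split_ifs at hm with hj
  · obtain rfl : j = b := by omega
    have la := psum_succ lam a.isLt
    have ma := psum_succ m a.isLt
    have lb := psum_succ lam b.isLt
    have mb := psum_succ m b.isLt
    have ha := psum_comp_swap hlt m a
    have hb := psum_comp_swap hlt m (b + 1)
    have := h a
    have := h (b + 1)
    have := Bool.toNat_le (m b)
    rw [← hab] at la ma
    simp only [Fin.eta, lt_irrefl, false_and, if_false, add_zero] at la ma lb mb ha hb
    simp only [show ¬ (b : ℕ) + 1 ≤ b by omega, and_false, if_false, add_zero] at hb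
    rcases hl with hl | hl <;> simp only [hl, Bool.toNat_false, Bool.toNat_true] at la lb <;> omega
  · have := h j
    omega

end AdjacentSwap

section Inversions

variable {n : ℕ}

def inversions (l : Fin n → Bool) : Finset (Fin n × Fin n) :=
  {p | p.1 < p.2 ∧ l p.1 = true ∧ l p.2 = false}

theorem invCount_eq_card_inversions (l : Fin n → Bool) : invCount n l = #(inversions l) := rfl

theorem invProd_eq_prod_inversions (l : Fin n → Bool) :
    invProd n l = ∏ p ∈ inversions l, (X p.2 - X p.1) := rfl

theorem rename_invProd (σ : Equiv.Perm (Fin n)) (l : Fin n → Bool) :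
    rename σ (invProd n l) =
      ∏ p ∈ (inversions l).map (σ.prodCongr σ).toEmbedding, (X p.2 - X p.1) := by
  simp [invProd_eq_prod_inversions, map_prod]

theorem prime_of_mem_inversions {l : Fin n → Bool} {p : Fin n × Fin n} (hp : p ∈ inversions l) :
    Prime (X p.2 - X p.1 : MvPolynomial (Fin n) ℤ) :=
  prime_X_sub_X (mem_filter.mp hp).2.1.ne'

theorem invProd_ne_zero (l : Fin n → Bool) : invProd n l ≠ 0 :=
  prod_ne_zero_iff.mpr fun _ hp => (prime_of_mem_inversions hp).ne_zero

theorem invProd_isHomogeneous (l : Fin n → Bool) : (invProd n l).IsHomogeneous (invCount n l) := by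
  simpa [invProd_eq_prod_inversions, invCount_eq_card_inversions] using
    IsHomogeneous.prod (inversions l) (fun p => (X p.2 - X p.1 : MvPolynomial _ ℤ)) (fun _ => 1)
      fun _ _ => (isHomogeneous_X _ _).sub (isHomogeneous_X _ _)

theorem invProd_dvd {l : Fin n → Bool} {f : MvPolynomial (Fin n) ℤ}
    (h : ∀ p ∈ inversions l, X p.2 - X p.1 ∣ f) : invProd n l ∣ f := by
  refine prod_dvd_of_prime_of_pairwise_not_dvd (fun _ => prime_of_mem_inversions) ?_ h
  intro p hp q hq hpq hdvd
  have hp' := (mem_filter.mp hp).2.1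
  have hq' := (mem_filter.mp hq).2.1
  rcases eq_and_eq_or_eq_and_eq_of_X_sub_X_dvd hq'.ne' hdvd with ⟨h2, h1⟩ | ⟨h2, h1⟩
  · exact hpq (Prod.ext h1 h2)
  · exact absurd (hp'.trans (h2 ▸ hq')) (h1 ▸ lt_irrefl _)

variable {a b : Fin n}

theorem map_swap_erase_inversions_comp_swap (hab : (b : ℕ) = a + 1) (l : Fin n → Bool) :
    ((inversions (l ∘ Equiv.swap a b)).erase (a, b)).map
      ((Equiv.swap a b).prodCongr (Equiv.swap a b)).toEmbedding = (inversions l).erase (a, b) := by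
  ext ⟨p, q⟩
  have hord : ((Equiv.swap a b p = a → Equiv.swap a b q ≠ b) ∧
      Equiv.swap a b p < Equiv.swap a b q) ↔ ((p = a → q ≠ b) ∧ p < q) := by
    simp only [Equiv.swap_apply_def, Fin.ext_iff, Fin.lt_def]
    split_ifs <;> simp_all <;> omega
  rw [mem_map_equiv]
  simp +contextual [inversions, ← and_assoc, hord]

theorem rename_swap_invProd_of_eq (hab : (b : ℕ) = a + 1) {l : Fin n → Bool} (h : l a = l b) :
    rename (Equiv.swap a b) (invProd n l) = invProd n l := by
  have hab_notMem : (a, b) ∉ inversions l := by simp [inversions, h]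
  have hmap := map_swap_erase_inversions_comp_swap hab l
  rw [comp_swap_eq_self h, erase_eq_of_notMem hab_notMem] at hmap
  rw [rename_invProd, hmap, invProd_eq_prod_inversions]

theorem inversions_comp_swap (hab : (b : ℕ) = a + 1) {l : Fin n → Bool} (hb : l b = false) :
    (inversions (l ∘ Equiv.swap a b)).map
      ((Equiv.swap a b).prodCongr (Equiv.swap a b)).toEmbedding = (inversions l).erase (a, b) := by
  have hab_notMem : (a, b) ∉ inversions (l ∘ Equiv.swap a b) := by simp [inversions, hb]
  rw [← map_swap_erase_inversions_comp_swap hab, erase_eq_of_notMem hab_notMem]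

theorem mem_inversions_of_adjacent (hab : (b : ℕ) = a + 1) {l : Fin n → Bool} (ha : l a = true)
    (hb : l b = false) : (a, b) ∈ inversions l := by
  simp [inversions, ha, hb, Fin.lt_of_val_eq_add_one hab]

theorem invCount_comp_swap_add_one (hab : (b : ℕ) = a + 1) {l : Fin n → Bool}
    (ha : l a = true) (hb : l b = false) :
    invCount n (l ∘ Equiv.swap a b) + 1 = invCount n l := by
  rw [invCount_eq_card_inversions, invCount_eq_card_inversions, ← card_map,
    inversions_comp_swap hab hb, card_erase_add_one (mem_inversions_of_adjacent hab ha hb)]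

theorem rename_swap_invProd (hab : (b : ℕ) = a + 1) {l : Fin n → Bool} (ha : l a = true)
    (hb : l b = false) :
    rename (Equiv.swap a b) (invProd n l) = (X a - X b) * invProd n (l ∘ Equiv.swap a b) := by
  have h : invProd n l =
      (X b - X a) * rename (Equiv.swap a b) (invProd n (l ∘ Equiv.swap a b)) := by
    rw [rename_invProd, inversions_comp_swap hab hb, invProd_eq_prod_inversions,
      mul_prod_erase _ (fun p => X p.2 - X p.1) (mem_inversions_of_adjacent hab ha hb)]
  rw [h, map_mul, rename_swap_rename_swap]
  simp

end Inversions

section GKM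

variable {n k : ℕ} {a b : Fin n} {α β : (Fin n → Bool) → MvPolynomial (Fin n) ℤ}

noncomputable def swapAct (a b : Fin n) (α : (Fin n → Bool) → MvPolynomial (Fin n) ℤ) :
    (Fin n → Bool) → MvPolynomial (Fin n) ℤ :=
  fun m => rename (Equiv.swap a b) (α (m ∘ Equiv.swap a b))

theorem swapAct_swapAct (a b : Fin n) (α : (Fin n → Bool) → MvPolynomial (Fin n) ℤ) :
    swapAct a b (swapAct a b α) = α := by
  funext m
  simp only [swapAct, comp_swap_comp_swap, rename_swap_rename_swap]

theorem swapAct_comm (a b : Fin n) (α : (Fin n → Bool) → MvPolynomial (Fin n) ℤ) :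
    swapAct b a α = swapAct a b α := by
  unfold swapAct
  rw [Equiv.swap_comm]

theorem swapAct_sub (a b : Fin n) (α β : (Fin n → Bool) → MvPolynomial (Fin n) ℤ) :
    swapAct a b (α - β) = swapAct a b α - swapAct a b β := by
  funext m
  simp [swapAct]

theorem IsGKM.sub (hα : IsGKM n k α) (hβ : IsGKM n k β) : IsGKM n k (α - β) := by
  intro l hl i j
  simpa only [Pi.sub_apply, sub_sub_sub_comm] using dvd_sub (hα l hl i j) (hβ l hl i j)

theorem isGKM_swapAct (hα : IsGKM n k α) : IsGKM n k (swapAct a b α) := by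
  intro l hl p q
  set σ := Equiv.swap a b
  have hconj : l ∘ Equiv.swap p q ∘ σ = (l ∘ σ) ∘ Equiv.swap (σ p) (σ q) := by
    rw [Equiv.swap_apply_apply]
    funext t
    simp [σ]
  have := map_dvd (rename σ) (hα (l ∘ σ) (by rwa [ones_comp_perm]) (σ p) (σ q))
  simpa [swapAct, hconj, σ, Function.comp_assoc] using this

theorem X_sub_X_dvd_sub_swapAct (hα : IsGKM n k α) {m : Fin n → Bool} (hm : ones n m = k) :
    X a - X b ∣ α m - swapAct a b α m := by
  have := dvd_add (hα m hm a b) (X_sub_X_dvd_sub_rename_swap a b (α (m ∘ Equiv.swap a b)))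
  rwa [sub_add_sub_cancel] at this

theorem IsGKM.of_eq_X_sub_X_mul {Q R : (Fin n → Bool) → MvPolynomial (Fin n) ℤ} (hab : a ≠ b)
    (hQ : IsGKM n k Q) (hQ_anti : ∀ m, ones n m = k → swapAct a b Q m = -Q m)
    (hQR : ∀ m, ones n m = k → Q m = (X a - X b) * R m) : IsGKM n k R := by
  have hR : ∀ m, ones n m = k → rename (Equiv.swap a b) (R m) = R (m ∘ Equiv.swap a b) := by
    intro m hm
    have hmσ : ones n (m ∘ Equiv.swap a b) = k := by rwa [ones_comp_perm]
    have := hQ_anti _ hmσ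
    simp only [swapAct, comp_swap_comp_swap, hQR m hm, hQR _ hmσ, map_mul, map_sub, rename_X,
      Equiv.swap_apply_left, Equiv.swap_apply_right] at this
    exact mul_left_cancel₀ (prime_X_sub_X hab).ne_zero (by linear_combination -this)
  -- On the edge `(a, b)` this is the invariance `hR`; on any other edge `X p - X q` is a prime
  -- not dividing `X a - X b`.
  intro l hl p q
  by_cases hpq : p = q
  · simp [hpq]
  by_cases hd : X p - X q ∣ (X a - X b : MvPolynomial (Fin n) ℤ)
  · rcases eq_and_eq_or_eq_and_eq_of_X_sub_X_dvd hab hd with ⟨rfl, rfl⟩ | ⟨rfl, rfl⟩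
    · rw [← hR l hl]
      exact X_sub_X_dvd_sub_rename_swap _ _ _
    · rw [Equiv.swap_comm, ← hR l hl, ← neg_dvd, neg_sub]
      exact X_sub_X_dvd_sub_rename_swap _ _ _
  · have h := hQ l hl p q
    rw [hQR l hl, hQR _ (by rwa [ones_comp_perm]), ← mul_sub] at h
    exact ((prime_X_sub_X hpq).dvd_or_dvd h).resolve_left hd

end GKM

section Schubert

variable {n k : ℕ} {a b : Fin n} {α β : (Fin n → Bool) → MvPolynomial (Fin n) ℤ}
  {lam : Fin n → Bool}

theorem IsGKM.eq_zero_of_forall_invCount_le {d : ℕ} (hα : IsGKM n k α)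
    (hhom : ∀ m, ones n m = k → (α m).IsHomogeneous d)
    (hlow : ∀ m, ones n m = k → invCount n m ≤ d → α m = 0) {m : Fin n → Bool}
    (hm : ones n m = k) : α m = 0 := by
  induction hc : invCount n m using Nat.strong_induction_on generalizing m with
  | _ c ih =>
  by_contra hne
  have hdvd : invProd n m ∣ α m := invProd_dvd fun p hp => by
    obtain ⟨hlt, h1, h2⟩ := (Finset.mem_filter.mp hp).2
    have h0 := ih _ (hc ▸ invCount_comp_swap_lt hlt h1 h2) (by rwa [ones_comp_perm]) rfl
    simpa [h0] using (hα m hm p.1 p.2).neg_left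
  have hdeg := totalDegree_le_of_dvd_of_isDomain hdvd hne
  rw [(invProd_isHomogeneous m).totalDegree (invProd_ne_zero m),
    (hhom m hm).totalDegree hne] at hdeg
  exact hne (hlow m hm hdeg)

structure IsGKMAbove (n k : ℕ) (lam : Fin n → Bool)
    (α : (Fin n → Bool) → MvPolynomial (Fin n) ℤ) : Prop where
  isGKM : IsGKM n k α
  suppAbove : SuppAbove n k α lam
  isHomogeneous : ∀ m, ones n m = k → (α m).IsHomogeneous (invCount n lam)

theorem IsGKMAbove.sub (hα : IsGKMAbove n k lam α) (hβ : IsGKMAbove n k lam β) :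
    IsGKMAbove n k lam (α - β) where
  isGKM := hα.isGKM.sub hβ.isGKM
  suppAbove m hm hne := by
    by_cases h : α m = 0
    · exact hβ.suppAbove m hm fun h' => hne (by simp [h, h'])
    · exact hα.suppAbove m hm h
  isHomogeneous m hm := (hα.isHomogeneous m hm).sub (hβ.isHomogeneous m hm)

theorem IsGKMAbove.eq_zero (hα : IsGKMAbove n k lam α) (hlam : ones n lam = k)
    (h0 : α lam = 0) {m : Fin n → Bool} (hm : ones n m = k) : α m = 0 := by
  refine hα.isGKM.eq_zero_of_forall_invCount_le hα.isHomogeneous (fun m hm hle => ?_) hm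
  by_contra hne
  obtain rfl : lam = m := by
    by_contra hlm
    exact (invCount_lt_of_domLE (hα.suppAbove m hm hne) hlm (hlam.trans hm.symm)).not_ge hle
  exact hne h0

theorem isGKMAbove_swapAct (hab : (b : ℕ) = a + 1) (hl : lam a = false ∨ lam b = true)
    (hα : IsGKMAbove n k lam α) : IsGKMAbove n k lam (swapAct a b α) where
  isGKM := isGKM_swapAct hα.isGKM
  suppAbove m hm hne := by
    refine domLE_of_domLE_comp_swap hab hl (hα.suppAbove _ (by rwa [ones_comp_perm]) ?_)
    exact fun h => hne (by simp [swapAct, h])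
  isHomogeneous m hm := (hα.isHomogeneous _ (by rwa [ones_comp_perm])).rename_isHomogeneous

end Schubert

section SchubertFamily

variable {n k : ℕ} {a b : Fin n} {S : (Fin n → Bool) → (Fin n → Bool) → MvPolynomial (Fin n) ℤ}
  {lam : Fin n → Bool}

theorem IsSchubertFamily.isGKMAbove (hS : IsSchubertFamily n k S) (hlam : ones n lam = k) :
    IsGKMAbove n k lam (S lam) :=
  ⟨(hS lam hlam).1, (hS lam hlam).2.1, fun m _ => (hS lam hlam).2.2.2 m⟩

theorem IsSchubertFamily.eq_of_isGKMAbove (hS : IsSchubertFamily n k S) (hlam : ones n lam = k)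
    {α : (Fin n → Bool) → MvPolynomial (Fin n) ℤ} (hα : IsGKMAbove n k lam α)
    (hval : α lam = invProd n lam) {m : Fin n → Bool} (hm : ones n m = k) : α m = S lam m :=
  sub_eq_zero.mp <| (hα.sub (hS.isGKMAbove hlam)).eq_zero hlam
    (by simp [hval, (hS lam hlam).2.2.1]) hm

theorem IsSchubertFamily.swapAct_eq_of_eq (hS : IsSchubertFamily n k S) (hab : (b : ℕ) = a + 1)
    (hlam : ones n lam = k) (h : lam a = lam b) {m : Fin n → Bool} (hm : ones n m = k) :
    swapAct a b (S lam) m = S lam m := by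
  refine hS.eq_of_isGKMAbove hlam (isGKMAbove_swapAct hab ?_ (hS.isGKMAbove hlam)) ?_ hm
  · cases hla : lam a <;> simp_all
  · simp [swapAct, comp_swap_eq_self h, (hS lam hlam).2.2.1, rename_swap_invProd_of_eq hab h]

theorem IsSchubertFamily.isGKMAbove_of_sub_swapAct_eq_mul (hS : IsSchubertFamily n k S)
    (hab : (b : ℕ) = a + 1) (hlam : ones n lam = k) (ha : lam a = true) (hb : lam b = false)
    {R : (Fin n → Bool) → MvPolynomial (Fin n) ℤ}
    (hR : ∀ m, ones n m = k → S lam m - swapAct a b (S lam) m = (X b - X a) * R m) :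
    IsGKMAbove n k (lam ∘ Equiv.swap a b) R := by
  obtain ⟨hG, hsupp, -, hhom⟩ := hS lam hlam
  have hba := (Fin.lt_of_val_eq_add_one hab).ne'
  have hX : (X b - X a : MvPolynomial (Fin n) ℤ) ≠ 0 := (prime_X_sub_X hba).ne_zero
  refine ⟨?_, fun m hm hne => ?_, fun m hm => ?_⟩
  · refine IsGKM.of_eq_X_sub_X_mul hba (hG.sub (isGKM_swapAct hG)) (fun m _ => ?_) hR
    rw [swapAct_comm, swapAct_sub, swapAct_swapAct]
    simp
  · have hQ : S lam m - swapAct a b (S lam) m ≠ 0 := by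
      rw [hR m hm]
      exact mul_ne_zero hX hne
    by_cases h : S lam m = 0
    · refine domLE_comp_swap_of_domLE_comp_swap hab ha hb
        (hsupp _ (by rwa [ones_comp_perm]) fun h' => hQ ?_)
      simp [h, swapAct, h']
    · exact domLE_trans (domLE_comp_swap (Fin.lt_of_val_eq_add_one hab) ha hb) (hsupp m hm h)
  · have hQ : (S lam m - swapAct a b (S lam) m).IsHomogeneous (invCount n lam) :=
      (hhom m).sub (hhom _).rename_isHomogeneous
    rw [hR m hm] at hQ
    have := hQ.of_mul_left ((isHomogeneous_X ℤ b).sub (isHomogeneous_X ℤ a)) hX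
    rwa [← invCount_comp_swap_add_one hab ha hb, Nat.add_sub_cancel] at this

theorem IsSchubertFamily.eq_invProd_of_sub_swapAct_eq_mul (hS : IsSchubertFamily n k S)
    (hab : (b : ℕ) = a + 1) (hlam : ones n lam = k) (ha : lam a = true) (hb : lam b = false)
    {R : (Fin n → Bool) → MvPolynomial (Fin n) ℤ}
    (hR : ∀ m, ones n m = k → S lam m - swapAct a b (S lam) m = (X b - X a) * R m) :
    R (lam ∘ Equiv.swap a b) = invProd n (lam ∘ Equiv.swap a b) := by
  have hμ : ones n (lam ∘ Equiv.swap a b) = k := by rwa [ones_comp_perm]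
  have hS0 : S lam (lam ∘ Equiv.swap a b) = 0 := by
    by_contra hne
    have := invCount_lt_of_domLE ((hS lam hlam).2.1 _ hμ hne) (comp_swap_ne ha hb).symm
      (hlam.trans hμ.symm)
    have := invCount_comp_swap_add_one hab ha hb
    omega
  have hba := (Fin.lt_of_val_eq_add_one hab).ne'
  have := hR _ hμ
  rw [hS0, swapAct, comp_swap_comp_swap, (hS lam hlam).2.2.1, rename_swap_invProd hab ha hb] at this
  exact mul_left_cancel₀ (prime_X_sub_X hba).ne_zero (by linear_combination -this)

theorem IsSchubertFamily.sub_swapAct_eq (hS : IsSchubertFamily n k S) (hab : (b : ℕ) = a + 1)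
    (hlam : ones n lam = k) (ha : lam a = true) (hb : lam b = false) {m : Fin n → Bool}
    (hm : ones n m = k) :
    S lam m - swapAct a b (S lam) m = (X b - X a) * S (lam ∘ Equiv.swap a b) m := by
  classical
  have hdvd : ∀ m, ones n m = k → X b - X a ∣ S lam m - swapAct a b (S lam) m := fun m hm => by
    rw [← neg_dvd, neg_sub]
    exact X_sub_X_dvd_sub_swapAct (hS lam hlam).1 hm
  let R m := if h : ones n m = k then (hdvd m h).choose else 0
  have hR : ∀ m, ones n m = k → S lam m - swapAct a b (S lam) m = (X b - X a) * R m :=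
    fun m hm => by simpa [R, hm] using (hdvd m hm).choose_spec
  rw [hR m hm, hS.eq_of_isGKMAbove (by rwa [ones_comp_perm])
    (hS.isGKMAbove_of_sub_swapAct_eq_mul hab hlam ha hb hR)
    (hS.eq_invProd_of_sub_swapAct_eq_mul hab hlam ha hb hR) hm]

theorem IsSchubertFamily.swapAct_eq_of_false_true (hS : IsSchubertFamily n k S)
    (hab : (b : ℕ) = a + 1) (hlam : ones n lam = k) (ha : lam a = false) (hb : lam b = true)
    {m : Fin n → Bool} (hm : ones n m = k) : swapAct a b (S lam) m = S lam m := by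
  have hμ : ones n (lam ∘ Equiv.swap a b) = k := by rwa [ones_comp_perm]
  have hμa : (lam ∘ Equiv.swap a b) a = true := by simp [hb]
  have hμb : (lam ∘ Equiv.swap a b) b = false := by simp [ha]
  have h1 := hS.sub_swapAct_eq hab hμ hμa hμb hm
  have h2 := congr_arg (rename (Equiv.swap a b))
    (hS.sub_swapAct_eq hab hμ hμa hμb (m := m ∘ Equiv.swap a b) (by rwa [ones_comp_perm]))
  simp only [swapAct, comp_swap_comp_swap, map_sub, map_mul, rename_X, rename_swap_rename_swap,
    Equiv.swap_apply_left, Equiv.swap_apply_right] at h1 h2 ⊢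
  have hba := (Fin.lt_of_val_eq_add_one hab).ne'
  exact mul_left_cancel₀ (prime_X_sub_X hba).ne_zero (by linear_combination h1 + h2)

theorem IsSchubertFamily.swapAct_eq (hS : IsSchubertFamily n k S) (hab : (b : ℕ) = a + 1)
    (hlam : ones n lam = k) (hl : lam a = false ∨ lam b = true) {m : Fin n → Bool}
    (hm : ones n m = k) : swapAct a b (S lam) m = S lam m := by
  by_cases h : lam a = lam b
  · exact hS.swapAct_eq_of_eq hab hlam h hm
  · obtain ⟨ha, hb⟩ : lam a = false ∧ lam b = true := by
      revert hl h
      cases lam a <;> cases lam b <;> simp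
    exact hS.swapAct_eq_of_false_true hab hlam ha hb hm

end SchubertFamily

/-- divided difference operators act on Schubert classes by:
if `λᵢ > λ_{i+1}` then `∂ᵢ S̃_λ = S̃_{sᵢ·λ}` (i.e.
`S̃_λ - sᵢ·S̃_λ = (y_{i+1} - yᵢ)·S̃_{sᵢ·λ}`); if `λᵢ ≤ λ_{i+1}` then
`∂ᵢ S̃_λ = 0` (i.e. `S̃_λ = sᵢ·S̃_λ`). -/
theorem stmt14 (n k : ℕ)
    (S : (Fin n → Bool) → (Fin n → Bool) → MvPolynomial (Fin n) ℤ)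
    (hS : IsSchubertFamily n k S)
    (i : ℕ) (h : i + 1 < n) (lam : Fin n → Bool) (hlam : ones n lam = k) :
    (lam ⟨i, by omega⟩ = true → lam ⟨i + 1, h⟩ = false →
      ∀ m, ones n m = k →
        S lam m - sAct n i h (S lam) m =
          (X ⟨i + 1, h⟩ - X ⟨i, by omega⟩ : MvPolynomial (Fin n) ℤ) *
            S (lam ∘ ⇑(Equiv.swap (⟨i, by omega⟩ : Fin n) ⟨i + 1, h⟩)) m) ∧
    ((lam ⟨i, by omega⟩ = false ∨ lam ⟨i + 1, h⟩ = true) →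
      ∀ m, ones n m = k → S lam m = sAct n i h (S lam) m) := by
  have hab : ((⟨i + 1, h⟩ : Fin n) : ℕ) = (⟨i, by omega⟩ : Fin n) + 1 := rfl
  -- `sAct n i h` is `swapAct ⟨i, _⟩ ⟨i + 1, h⟩` by definition.
  exact ⟨fun ha hb _ hm => hS.sub_swapAct_eq hab hlam ha hb hm,
    fun hl _ hm => (hS.swapAct_eq hab hlam hl hm).symm⟩
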